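/- Let π be a profile and ≻₀ a preference satisfying Flexible Condition 1. For any scoring rule S (a weakly decreasing score vector S₁ ≥ S₂ ≥ ... ≥ S_K) and any alternatives a, b with a ≻₀ b, the total score of a in π is at least the total score of b in π. -/

import Mathlib

/-!
If `a ≻₀ b`, swapping `a` and `b` in a ranking that puts `b` above `a` strictly decreases the
inversion distance to `≻₀`: relabelling by the swap maps the inversions gained injectively into
the inversions lost, and misses the lost inversion `(b, a)`. Flexible Condition 1 therefore makes
every ranking with `a` above `b` at least as frequent as its swap. Pairing each ranking with its
swap, the score of `a` minus that of `b` becomes a sum of products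
`(μ(≻) - μ(swap ≻)) * (S (rank ≻ a) - S (rank ≻ b))` whose two factors have the same sign.
-/

open Classical

/-- Inversion distance between two preference relations: the number of (ordered
representatives of) unordered pairs ranked oppositely. For strict total orders,
each oppositely-ranked unordered pair {x,y} is counted exactly once. -/
noncomputable def invDist {A : Type*} [Fintype A] (r r' : A → A → Prop) : ℕ :=
  {p : A × A | r p.1 p.2 ∧ r' p.2 p.1}.ncard

/-- Frequency of a preference in a profile (list of preferences). -/
noncomputable def freq {A : Type*} (π : List (A → A → Prop)) (r : A → A → Prop) : ℕ :=
  {i : Fin π.length | π.get i = r}.ncard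

/-- Number of voters in the profile ranking `a` above `b`. -/
noncomputable def votesFor {A : Type*} (π : List (A → A → Prop)) (a b : A) : ℕ :=
  {i : Fin π.length | π.get i a b}.ncard

/-- The preference obtained by swapping alternatives `a` and `b` in the ranking. -/
def swapPref {A : Type*} [DecidableEq A] (a b : A) (r : A → A → Prop) : A → A → Prop :=
  fun x y => r (Equiv.swap a b x) (Equiv.swap a b y)

/-- The (0-based) rank of alternative `x` in preference `r`: the number of
alternatives ranked strictly above it. The top alternative has rank 0. -/
noncomputable def rank {A : Type*} (r : A → A → Prop) (x : A) : ℕ :=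
  {y | r y x}.ncard

/-- Total score of alternative `x` in profile `π` under a scoring vector `S`
(`S j` is the score of the alternative with `j` alternatives above it). -/
noncomputable def totalScore {A : Type*} (π : List (A → A → Prop)) (S : ℕ → ℝ) (x : A) : ℝ :=
  ∑ i : Fin π.length, S (rank (π.get i) x)

open Function Set

theorem Set.ncard_lt_ncard_of_mapsTo_sdiff {α : Type*} [Finite α] {s t : Set α} {f : α → α}
    (hf : Injective f) (hst : MapsTo f (s \ t) (t \ s)) {z : α} (hz : z ∈ t \ s)
    (hzf : z ∉ f '' (s \ t)) : s.ncard < t.ncard := by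
  rw [ncard_lt_ncard_iff_ncard_sdiff_lt_ncard_sdiff, ← ncard_image_of_injective _ hf]
  exact ncard_lt_ncard ⟨hst.image_subset, fun h => hzf (h hz)⟩

-- Reindexing by `σ` shows that twice the sum equals `∑ i, (w i - w (σ i)) * D i`.
theorem Fintype.sum_mul_nonneg_of_involutive {ι R : Type*} [Fintype ι] [Field R] [LinearOrder R]
    [IsStrictOrderedRing R] {σ : ι → ι} (hσ : Involutive σ) (w D : ι → R)
    (hD : ∀ i, D (σ i) = -D i) (h : ∀ i, 0 ≤ (w i - w (σ i)) * D i) :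
    0 ≤ ∑ i, w i * D i := by
  have hperm : ∑ i, w (σ i) * D (σ i) = ∑ i, w i * D i :=
    Equiv.sum_comp (hσ.toPerm σ) fun i => w i * D i
  have hsum : 0 ≤ ∑ i, (w i - w (σ i)) * D i := Finset.sum_nonneg fun i _ => h i
  simp only [hD, sub_mul, Finset.sum_sub_distrib, mul_neg, Finset.sum_neg_distrib] at hsum hperm
  linarith

section Preferences

variable {A : Type*}

theorem swapPref_involutive [DecidableEq A] (a b : A) : Involutive (swapPref (A := A) a b) :=
  fun r => by
    funext x y
    simp [swapPref]

instance [DecidableEq A] {a b : A} {r : A → A → Prop} [IsStrictTotalOrder A r] :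
    IsStrictTotalOrder A (swapPref a b r) :=
  (RelEmbedding.preimage (Equiv.swap a b).toEmbedding r).isStrictTotalOrder

theorem rank_swapPref [DecidableEq A] (a b : A) (r : A → A → Prop) (x : A) :
    rank (swapPref a b r) x = rank r (Equiv.swap a b x) :=
  ncard_preimage_of_injective_subset_range (s := {y | r y (Equiv.swap a b x)})
    (Equiv.swap a b).injective (by simp)

theorem rank_le_rank [Finite A] {r : A → A → Prop} [IsTrans A r] {a b : A} (hab : r a b) :
    rank r a ≤ rank r b :=
  ncard_le_ncard fun _ hy => _root_.trans hy hab

theorem rel_swap_of_inversion_swapPref [DecidableEq A] {s r0 : A → A → Prop}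
    [IsStrictTotalOrder A s] [IsStrictOrder A r0] {a b : A} (hab : r0 a b) (hba : s b a)
    {x y : A} (hxy : s (Equiv.swap a b x) (Equiv.swap a b y)) (hyx : r0 y x) (hnxy : ¬ s x y) :
    r0 (Equiv.swap a b y) (Equiv.swap a b x) := by
  have hyx' : s y x := (trichotomous_of s x y).resolve_left hnxy |>.resolve_left
    (by rintro rfl; exact irrefl_of r0 x hyx)
  -- Only pairs meeting `{a, b}` change; each such case contradicts `s b a` or follows by
  -- transitivity through `r0 a b`.
  simp only [Equiv.swap_apply_def] at *
  split_ifs at * <;> subst_vars <;>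
    grind [trans_of s, irrefl_of s, trans_of r0, irrefl_of r0]

theorem invDist_swapPref_lt [Fintype A] [DecidableEq A] {s r0 : A → A → Prop}
    [IsStrictTotalOrder A s] [IsStrictOrder A r0] {a b : A} (hab : r0 a b) (hba : s b a) :
    invDist (swapPref a b s) r0 < invDist s r0 := by
  let τ := Equiv.swap a b
  refine ncard_lt_ncard_of_mapsTo_sdiff (f := τ.prodCongr τ) (z := (b, a))
    (τ.prodCongr τ).injective ?_
    ⟨⟨hba, hab⟩, fun h => asymm hba (by simpa [swapPref, τ] using h.1)⟩ ?_
  · rintro ⟨x, y⟩ ⟨⟨hxy, hyx⟩, hnot⟩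
    have hnxy : ¬ s x y := fun h => hnot ⟨h, hyx⟩
    exact ⟨⟨hxy, rel_swap_of_inversion_swapPref hab hba hxy hyx hnxy⟩,
      fun h => hnxy (by simpa [swapPref, τ] using h.1)⟩
  · rintro ⟨⟨x, y⟩, ⟨⟨-, hyx⟩, -⟩, hxy⟩
    obtain ⟨rfl, rfl⟩ : x = a ∧ y = b := by simpa [τ, Equiv.swap_apply_eq_iff] using hxy
    exact asymm hab hyx

def FlexibleCondition [Fintype A] (π : List (A → A → Prop)) (r0 : A → A → Prop) : Prop :=
  ∀ r' r : A → A → Prop, IsStrictTotalOrder A r' → IsStrictTotalOrder A r →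
    freq π r' > freq π r → invDist r' r0 ≤ invDist r r0

theorem freq_eq_zero_of_notMem {π : List (A → A → Prop)} {r : A → A → Prop}
    (hr : r ∉ π) : freq π r = 0 :=
  (ncard_eq_zero (toFinite _)).2 <| eq_empty_of_forall_notMem fun i hi => hr (hi ▸ π.get_mem i)

theorem sum_get_eq_sum_freq_mul [Fintype A] [DecidableEq A] (π : List (A → A → Prop))
    (g : (A → A → Prop) → ℝ) :
    ∑ i : Fin π.length, g (π.get i) = ∑ r, (freq π r : ℝ) * g r := by
  rw [← Finset.sum_fiberwise' Finset.univ π.get g]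
  refine Finset.sum_congr rfl fun r _ => ?_
  rw [Finset.sum_const, nsmul_eq_mul, freq, ← Set.toFinset_ofPred, ← ncard_eq_toFinset_card']

variable [Fintype A] [DecidableEq A] {π : List (A → A → Prop)} {r0 : A → A → Prop}
  [IsStrictOrder A r0] {a b : A}

theorem freq_swapPref_le (hflex : FlexibleCondition π r0) (hab : r0 a b) {r : A → A → Prop}
    [IsStrictTotalOrder A r] (hr : r a b) : freq π (swapPref a b r) ≤ freq π r := by
  by_contra! hfreq
  have hle := hflex _ r inferInstance inferInstance hfreq
  have hlt := invDist_swapPref_lt (s := swapPref a b r) (r0 := r0) hab (by simpa [swapPref])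
  rw [swapPref_involutive] at hlt
  omega

theorem freq_sub_mul_score_sub_nonneg (hπ : ∀ r ∈ π, IsStrictTotalOrder A r)
    (hflex : FlexibleCondition π r0) {S : ℕ → ℝ} (hS : Antitone S) (hab : r0 a b)
    (r : A → A → Prop) :
    0 ≤ ((freq π r : ℝ) - freq π (swapPref a b r)) * (S (rank r a) - S (rank r b)) := by
  by_cases hr : IsStrictTotalOrder A r
  · rcases trichotomous_of r a b with hrab | rfl | hrba
    · exact mul_nonneg (sub_nonneg.2 (Nat.cast_le.2 (freq_swapPref_le hflex hab hrab)))
        (sub_nonneg.2 (hS (rank_le_rank hrab)))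
    · exact absurd hab (irrefl a)
    · have hfreq := freq_swapPref_le hflex hab (r := swapPref a b r) (by simpa [swapPref])
      rw [swapPref_involutive] at hfreq
      exact mul_nonneg_of_nonpos_of_nonpos (sub_nonpos.2 (Nat.cast_le.2 hfreq))
        (sub_nonpos.2 (hS (rank_le_rank hrba)))
  · have hswap : swapPref a b r ∉ π := fun h => hr <| by
      have := hπ _ h
      exact swapPref_involutive a b r ▸ inferInstance
    simp [freq_eq_zero_of_notMem (fun h => hr (hπ r h)), freq_eq_zero_of_notMem hswap]

end Preferences

theorem flexible_scoring_general {A : Type*} [Fintype A]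
    (π : List (A → A → Prop)) (hπ : ∀ r ∈ π, IsStrictTotalOrder A r)
    (r0 : A → A → Prop) (hr0 : IsStrictTotalOrder A r0)
    (hflex : ∀ r' r : A → A → Prop, IsStrictTotalOrder A r' → IsStrictTotalOrder A r →
      freq π r' > freq π r → invDist r' r0 ≤ invDist r r0)
    (S : ℕ → ℝ) (hS : Antitone S)
    (a b : A) (hab : r0 a b) :
    totalScore π S b ≤ totalScore π S a := by
  have hdiff : totalScore π S a - totalScore π S b =
      ∑ r, (freq π r : ℝ) * (S (rank r a) - S (rank r b)) := by
    rw [totalScore, totalScore, ← Finset.sum_sub_distrib]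
    exact sum_get_eq_sum_freq_mul π fun r => S (rank r a) - S (rank r b)
  have hpaired := Fintype.sum_mul_nonneg_of_involutive (swapPref_involutive a b)
    (fun r => (freq π r : ℝ)) (fun r => S (rank r a) - S (rank r b))
    (fun r => by simp [rank_swapPref]) (freq_sub_mul_score_sub_nonneg hπ hflex hS hab)
  linarith

/-- Under Flexible Condition 1, for every scoring rule (weakly decreasing score
vector) and alternatives `a ≻₀ b`, the total score of `a` is at least the total
score of `b`. -/
theorem flexible_scoring {A : Type*} [Fintype A]
    (hK : 3 ≤ Fintype.card A)
    (π : List (A → A → Prop)) (hπ : ∀ r ∈ π, IsStrictTotalOrder A r)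
    (r0 : A → A → Prop) (hr0 : IsStrictTotalOrder A r0)
    (hflex : ∀ r' r : A → A → Prop, IsStrictTotalOrder A r' → IsStrictTotalOrder A r →
      freq π r' > freq π r → invDist r' r0 ≤ invDist r r0)
    (S : ℕ → ℝ) (hS : Antitone S)
    (a b : A) (hab : r0 a b) :
    totalScore π S b ≤ totalScore π S a :=
  flexible_scoring_general π hπ r0 hr0 hflex S hS a b hab
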